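/- arXiv:1305.6129 — 4 statements merged into one kernel-verified Lean document; each statement's English description precedes it below -/
import Mathlib

section
/- Maximizing mutual information I(X; Y) = H[X] − E[H[X | Y]] over choices of Y does not in general minimize the expected posterior entropy E[H[X | Y]]: there exist random variables X and two observation choices Y1, Y2 such that I(X_{S̄1}; Y1) > I(X_{S̄2}; Y2) for the respective unobserved parts but E[H[X_{S̄1} | Y1]] > E[H[X_{S̄2} | Y2]]. -/
open Matrix Real

/-- Submatrix of a covariance matrix with rows indexed by `S` and columns by `T`. -/
def covSub {n : ℕ} (M : Matrix (Fin n) (Fin n) ℝ) (S T : Finset (Fin n)) :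
    Matrix S T ℝ :=
  M.submatrix (fun i => (i : Fin n)) (fun j => (j : Fin n))

/-- Posterior (conditional) covariance of the unobserved part `X_{S̄}` given `X_S`
for a Gaussian vector with covariance `M`: the Schur complement. -/
noncomputable def schurCompl {n : ℕ} (M : Matrix (Fin n) (Fin n) ℝ) (S : Finset (Fin n)) :
    Matrix (Sᶜ : Finset (Fin n)) (Sᶜ : Finset (Fin n)) ℝ :=
  covSub M Sᶜ Sᶜ - covSub M Sᶜ S * (covSub M S S)⁻¹ * covSub M S Sᶜ

/-- Prior differential entropy `H[X_{S̄}]` of the unobserved part of a Gaussian vector. -/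
noncomputable def priorEnt {n : ℕ} (M : Matrix (Fin n) (Fin n) ℝ) (S : Finset (Fin n)) : ℝ :=
  Real.log (Real.sqrt ((2 * Real.pi * Real.exp 1) ^ (Sᶜ.card) * (covSub M Sᶜ Sᶜ).det))

/-- Posterior differential entropy `H[X_{S̄} | X_S]` of a Gaussian vector. -/
noncomputable def postEnt {n : ℕ} (M : Matrix (Fin n) (Fin n) ℝ) (S : Finset (Fin n)) : ℝ :=
  Real.log (Real.sqrt ((2 * Real.pi * Real.exp 1) ^ (Sᶜ.card) * (schurCompl M S).det))

/-! Let `X₀, X₁` have unit variance and correlation `1/2`, and let `X₂` be independent of them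
with variance `2`. Observing `X₂` teaches nothing about `X₀, X₁` (mutual information `0`) but
leaves only the two low-variance coordinates unobserved, while observing `X₀` is informative
about `X₁` yet leaves the high-variance `X₂` unobserved. All entropies are logarithms of
determinants, and the posterior ones follow from the Schur determinant formula
`det M = det M_SS · det (M / M_SS)`. For `S₁ = {0}` and `S₂ = {2}` the prior determinants are
`2` and `3/4`, the posterior ones `3/2` and `3/4`. -/

section SchurComplement

variable {n : ℕ}

theorem det_eq_det_fromBlocks_covSub (M : Matrix (Fin n) (Fin n) ℝ) (S : Finset (Fin n)) :
    M.det = (fromBlocks (covSub M S S) (covSub M S Sᶜ) (covSub M Sᶜ S)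
      (covSub M Sᶜ Sᶜ)).det := by
  let e : S ⊕ (Sᶜ : Finset (Fin n)) ≃ Fin n :=
    (Equiv.sumCongr (Equiv.refl _) (Equiv.subtypeEquivRight (by simp))).trans
      (Equiv.sumCompl (· ∈ S))
  rw [← det_submatrix_equiv_self e]
  congr 1
  ext (i | i) (j | j) <;> rfl

theorem det_covSub_mul_det_schurCompl (M : Matrix (Fin n) (Fin n) ℝ) (S : Finset (Fin n))
    (hS : IsUnit (covSub M S S).det) :
    (covSub M S S).det * (schurCompl M S).det = M.det := by
  have := (covSub M S S).invertibleOfIsUnitDet hS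
  rw [det_eq_det_fromBlocks_covSub M S, det_fromBlocks₁₁, invOf_eq_nonsing_inv, schurCompl]

theorem det_covSub_singleton (M : Matrix (Fin n) (Fin n) ℝ) (s : Fin n) :
    (covSub M {s} {s}).det = M s s := by
  rw [det_unique]; rfl

theorem det_schurCompl_singleton (M : Matrix (Fin n) (Fin n) ℝ) {s : Fin n} (hs : M s s ≠ 0) :
    (schurCompl M {s}).det = M.det / M s s := by
  have h := det_covSub_mul_det_schurCompl M {s} (by rw [det_covSub_singleton]; exact hs.isUnit)
  rw [det_covSub_singleton] at h
  rw [← h, mul_div_cancel_left₀ _ hs]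

theorem det_covSub_pair (M : Matrix (Fin n) (Fin n) ℝ) {T : Finset (Fin n)} {a b : Fin n}
    (hab : a ≠ b) (hT : T = {a, b}) :
    (covSub M T T).det = M a a * M b b - M a b * M b a := by
  subst hT
  let e : Fin 2 ≃ ({a, b} : Finset (Fin n)) :=
    Equiv.ofBijective ![⟨a, by simp⟩, ⟨b, by simp⟩] <| by
      refine (Fintype.bijective_iff_injective_and_card _).mpr
        ⟨?_, by rw [Fintype.card_coe, Finset.card_pair hab]; rfl⟩
      intro i j
      fin_cases i <;> fin_cases j <;> simp [hab, hab.symm]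
  rw [← det_submatrix_equiv_self e, det_fin_two]
  rfl

end SchurComplement

theorem log_sqrt_mul_lt_log_sqrt_mul {c a b : ℝ} (hc : 0 < c) (ha : 0 < a) (hab : a < b) :
    Real.log √(c * a) < Real.log √(c * b) :=
  Real.log_lt_log (by positivity) (Real.sqrt_lt_sqrt (by positivity) (by gcongr))

noncomputable def exampleCov : Matrix (Fin 3) (Fin 3) ℝ := !![1, 1/2, 0; 1/2, 1, 0; 0, 0, 2]

theorem exampleCov_posDef : exampleCov.PosDef := by
  rw [posDef_iff_dotProduct_mulVec]
  refine ⟨by ext i j; fin_cases i <;> fin_cases j <;> simp [exampleCov], fun x hx => ?_⟩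
  have hform : star x ⬝ᵥ exampleCov *ᵥ x = (x 0 + x 1 / 2) ^ 2 + 3 / 4 * x 1 ^ 2 + 2 * x 2 ^ 2 := by
    simp only [dotProduct, mulVec, exampleCov, Fin.sum_univ_three, of_apply, cons_val',
      cons_val_zero, cons_val_one, cons_val, cons_val_fin_one, Pi.star_apply, star_trivial]
    ring
  rw [hform]
  by_contra! hle
  apply hx
  have h1 : x 1 = 0 := by nlinarith [sq_nonneg (x 0 + x 1 / 2), sq_nonneg (x 2)]
  have h2 : x 2 = 0 := by nlinarith [sq_nonneg (x 0 + x 1 / 2), sq_nonneg (x 1)]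
  have h0 : x 0 = 0 := by nlinarith [sq_nonneg (x 2), sq_nonneg (x 1)]
  ext i
  fin_cases i <;> assumption

theorem det_exampleCov : exampleCov.det = 3 / 2 := by
  simp only [det_fin_three, exampleCov, of_apply, cons_val', cons_val_zero, cons_val_one,
    cons_val, cons_val_fin_one]
  norm_num

theorem det_covSub_exampleCov_compl_zero : (covSub exampleCov {0}ᶜ {0}ᶜ).det = 2 := by
  rw [det_covSub_pair exampleCov (by decide : (1 : Fin 3) ≠ 2) (by decide)]
  simp [exampleCov]

theorem det_covSub_exampleCov_compl_two : (covSub exampleCov {2}ᶜ {2}ᶜ).det = 3 / 4 := by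
  rw [det_covSub_pair exampleCov (by decide : (0 : Fin 3) ≠ 1) (by decide)]
  norm_num [exampleCov]

theorem det_schurCompl_exampleCov_zero : (schurCompl exampleCov {0}).det = 3 / 2 := by
  have h00 : exampleCov 0 0 = 1 := rfl
  rw [det_schurCompl_singleton exampleCov (by rw [h00]; norm_num), det_exampleCov, h00, div_one]

theorem det_schurCompl_exampleCov_two : (schurCompl exampleCov {2}).det = 3 / 4 := by
  have h22 : exampleCov 2 2 = 2 := rfl
  rw [det_schurCompl_singleton exampleCov (by rw [h22]; norm_num), det_exampleCov, h22]
  norm_num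

/-- Maximizing mutual information `I(X_{S̄}; X_S) = H[X_{S̄}] − H[X_{S̄} | X_S]` does not
in general minimize the expected posterior entropy `H[X_{S̄} | X_S]`: there exists a
Gaussian vector (a positive definite covariance matrix) and two equal-sized observation
choices `S₁, S₂` such that `S₁` has strictly larger mutual information but also strictly
larger posterior entropy. -/
theorem mutualInfo_not_minimize_posterior_entropy :
    ∃ (n : ℕ) (M : Matrix (Fin n) (Fin n) ℝ) (_ : M.PosDef)
      (S1 S2 : Finset (Fin n)),
      S1.card = S2.card ∧
      priorEnt M S1 - postEnt M S1 > priorEnt M S2 - postEnt M S2 ∧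
      postEnt M S1 > postEnt M S2 := by
  have hc : 0 < (2 * Real.pi * Real.exp 1) ^ 2 := by positivity
  refine ⟨3, exampleCov, exampleCov_posDef, {0}, {2}, rfl, ?_, ?_⟩ <;>
    simp only [priorEnt, postEnt, gt_iff_lt, show ({0}ᶜ : Finset (Fin 3)).card = 2 from rfl,
      show ({2}ᶜ : Finset (Fin 3)).card = 2 from rfl, det_covSub_exampleCov_compl_zero,
      det_covSub_exampleCov_compl_two, det_schurCompl_exampleCov_zero,
      det_schurCompl_exampleCov_two]
  · linarith [log_sqrt_mul_lt_log_sqrt_mul hc (by norm_num : (0 : ℝ) < 3 / 2)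
      (by norm_num : (3 / 2 : ℝ) < 2)]
  · exact log_sqrt_mul_lt_log_sqrt_mul hc (by norm_num) (by norm_num)
end

section
/- Adaptive duality (Theorem 1): for every stage i = 0,…,n−1, the cost-to-go value function of the optimal adaptive exploration policy satisfies V^{π¹}_i(d_i) = H[Z_{x̄_{0:i}} | d_i] − U^{π¹}_i(d_i), where V is defined by the cost-minimizing dynamic program with terminal cost H[Z_{x̄_{0:n}} | d_n], and U by the reward-maximizing dynamic program with stagewise reward H[Z_{new locations} | d_i]. -/
lemma inf'_const_sub' {α : Type*} (s : Finset α) (h : s.Nonempty) (c : ℝ) (f : α → ℝ) :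
    s.inf' h (fun a => c - f a) = c - s.sup' h f := by
  apply le_antisymm
  · obtain ⟨a, ha, hfa⟩ := s.exists_mem_eq_sup' h f
    calc s.inf' h (fun a => c - f a) ≤ c - f a := Finset.inf'_le _ ha
      _ = c - s.sup' h f := by rw [hfa]
  · rw [Finset.le_inf'_iff]
    intro a ha
    have := Finset.le_sup' f ha
    linarith


/-- Adaptive duality (Theorem 1).  Abstract dynamic-programming setup: `D` is the type
of data (complete observation histories `d_i`), actions come from finite nonempty sets
`Act d`, `Exp i d a g` is the expectation of `g(d_{i+1})` over the measurements at the
new locations `τ(x_i, a)` given `d_i = d` (a linear, probability-normalized operator),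
`Hrem i d = H[Z_{x̄_{0:i}} | d_i]` is the entropy of the unobserved remainder, and
`Hnew i d a = H[Z_{τ(x_i,a)} | d_i]` is the stagewise entropy.  `V` is the
cost-minimizing dynamic program with terminal cost `Hrem n`, and `U` the
reward-maximizing dynamic program with stagewise reward `Hnew` (terminal stage `n-1`).
The chain rule of entropy gives `Hrem i d = Hnew i d a + Exp i d a (Hrem (i+1))`.
Then for every stage `i = 0,…,n−1`, `V^{π¹}_i(d_i) = H[Z_{x̄_{0:i}} | d_i] − U^{π¹}_i(d_i)`. -/
theorem adaptive_duality
    {D : Type*} {α : Type*} (n : ℕ) (hn : 1 ≤ n)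
    (Act : D → Finset α) (hAct : ∀ d, (Act d).Nonempty)
    (Exp : ℕ → D → α → (D → ℝ) → ℝ)
    (Hrem : ℕ → D → ℝ) (Hnew : ℕ → D → α → ℝ)
    (V U : ℕ → D → ℝ)
    -- cost-minimizing dynamic program:
    (hVterm : ∀ d, V n d = Hrem n d)
    (hV : ∀ i < n, ∀ d, V i d = (Act d).inf' (hAct d) fun a => Exp i d a (V (i + 1)))
    -- reward-maximizing dynamic program:
    (hUterm : ∀ d, U (n - 1) d = (Act d).sup' (hAct d) fun a => Hnew (n - 1) d a)
    (hU : ∀ i < n - 1, ∀ d,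
      U i d = (Act d).sup' (hAct d) fun a => Hnew i d a + Exp i d a (U (i + 1)))
    -- chain rule of entropy:
    (chain : ∀ i < n, ∀ d, ∀ a ∈ Act d,
      Hrem i d = Hnew i d a + Exp i d a (Hrem (i + 1)))
    -- linearity of expectation an normalization:
    (hExpSub : ∀ i d a g h,
      Exp i d a (fun x => g x - h x) = Exp i d a g - Exp i d a h) :
    ∀ i < n, ∀ d, V i d = Hrem i d - U i d := by
  suffices H : ∀ k i, i + k + 1 = n → ∀ d, V i d = Hrem i d - U i d by
    intro i hi d
    exact H (n - i - 1) i (by omega) d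
  intro k
  induction k with
  | zero =>
    intro i hi d
    subst hi
    simp only [Nat.add_zero] at *
    have hUi : U i d = (Act d).sup' (hAct d) fun a => Hnew i d a := by
      have := hUterm d
      simpa using this
    rw [hV i (by omega) d, hUi]
    rw [Finset.inf'_congr (hAct d) rfl (g := fun a => Hrem i d - Hnew i d a) ?_]
    · exact inf'_const_sub' _ _ _ _
    · intro a ha
      have hc := chain i (by omega) d a ha
      have hV1 : Exp i d a (V (i + 1)) = Exp i d a (Hrem (i + 1)) := by
        congr 1
        funext x
        exact hVterm x
      rw [hV1]
      linarith
  | succ k ih =>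
    intro i hi d
    have hi1 : i + 1 + k + 1 = n := by omega
    have hUi : U i d = (Act d).sup' (hAct d)
        fun a => Hnew i d a + Exp i d a (U (i + 1)) := hU i (by omega) d
    rw [hV i (by omega) d, hUi]
    rw [Finset.inf'_congr (hAct d) rfl
        (g := fun a => Hrem i d - (Hnew i d a + Exp i d a (U (i + 1)))) ?_]
    · exact inf'_const_sub' _ _ _ _
    · intro a ha
      have hV1 : Exp i d a (V (i + 1))
          = Exp i d a (fun x => Hrem (i + 1) x - U (i + 1) x) := by
        congr 1
        funext x
        exact ih (i + 1) hi1 x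
      rw [hV1, hExpSub]
      have hc := chain i (by omega) d a ha
      linarith
end

section
/- Theorem 2 (no benefit of adaptivity): if for every stage i the stagewise entropy H[Z_{τ(x_i, a_i)} | d_i] is independent of the measurement values z_{x_{1:n}} (depending only on the observed locations), then the optimal value of the adaptive dynamic program equals the optimal value of the single-stage non-adaptive problem: U^{π¹}_0(d_0) = max_{a_{0:n-1}} H[Z_{x_{1:n}} | d_0], and the optimal adaptive policy can be chosen non-adaptive. -/
/-!
Once the stagewise entropies depend only on the locations, the value of every stage of the
adaptive program is constant in the measurement values, so each expectation is the expectation of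
a constant and disappears. What remains is a deterministic dynamic program over location paths,
whose value is, by the principle of optimality, the largest total reward along an admissible
action sequence; by the chain rule that total is the joint entropy of the path.
-/

def pathLoc {L α : Type*} (nextL : L → α → L) (l0 : L) (s : ℕ → α) : ℕ → L
  | 0 => l0
  | i + 1 => nextL (pathLoc nextL l0 s i) (s i)

namespace PathDP

variable {L α : Type*} (Act : L → Finset α) (hAct : ∀ l, (Act l).Nonempty)
  (nextL : L → α → L)

theorem pathLoc_succ' (l : L) (s : ℕ → α) (j : ℕ) :
    pathLoc nextL l s (j + 1) = pathLoc nextL (nextL l (s 0)) (fun i => s (i + 1)) j := by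
  induction j with
  | zero => rfl
  | succ j ih => exact congrArg (nextL · (s (j + 1))) ih

def IsAdmissible (r : ℕ) (l : L) (s : ℕ → α) : Prop :=
  ∀ j < r, s j ∈ Act (pathLoc nextL l s j)

theorem isAdmissible_succ_iff (r : ℕ) (l : L) (s : ℕ → α) :
    IsAdmissible Act nextL (r + 1) l s ↔
      s 0 ∈ Act l ∧
        IsAdmissible Act nextL r (nextL l (s 0)) (fun j => s (j + 1)) := by
  simp only [IsAdmissible, Nat.forall_lt_succ_left, pathLoc_succ']
  rfl

def pathReward (f : ℕ → L → α → ℝ) (r : ℕ) (l : L) (s : ℕ → α) : ℝ :=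
  ∑ j ∈ Finset.range r, f j (pathLoc nextL l s j) (s j)

theorem pathReward_succ (f : ℕ → L → α → ℝ) (r : ℕ) (l : L) (s : ℕ → α) :
    pathReward nextL f (r + 1) l s =
      f 0 l (s 0) +
        pathReward nextL (fun j => f (j + 1)) r (nextL l (s 0)) (fun j => s (j + 1)) := by
  simp only [pathReward, Finset.sum_range_succ', pathLoc_succ']
  exact add_comm _ _

/-- The reward family is shifted at every stage: `f j` is the reward `j` stages ahead. -/
def maxPathReward : (ℕ → L → α → ℝ) → ℕ → L → ℝ
  | _, 0, _ => 0
  | f, r + 1, l => (Act l).sup' (hAct l) fun a =>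
      f 0 l a + maxPathReward (fun j => f (j + 1)) r (nextL l a)

theorem pathReward_le_maxPathReward (f : ℕ → L → α → ℝ) (r : ℕ) (l : L) (s : ℕ → α)
    (hs : IsAdmissible Act nextL r l s) :
    pathReward nextL f r l s ≤ maxPathReward Act hAct nextL f r l := by
  induction r generalizing f l s with
  | zero => simp [pathReward, maxPathReward]
  | succ r ih =>
    obtain ⟨hs0, hs⟩ := (isAdmissible_succ_iff Act nextL r l s).1 hs
    rw [pathReward_succ, maxPathReward]
    exact le_trans (add_le_add le_rfl (ih _ _ _ hs))
      (Finset.le_sup' (fun a => f 0 l a + maxPathReward Act hAct nextL _ r (nextL l a)) hs0)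

theorem exists_pathReward_eq_maxPathReward (f : ℕ → L → α → ℝ) (r : ℕ) (l : L) :
    ∃ s, IsAdmissible Act nextL r l s ∧
      pathReward nextL f r l s = maxPathReward Act hAct nextL f r l := by
  induction r generalizing f l with
  | zero =>
    exact ⟨fun _ => (hAct l).choose, fun _ h => absurd h (Nat.not_lt_zero _), rfl⟩
  | succ r ih =>
    obtain ⟨a, ha, hmax⟩ := Finset.exists_mem_eq_sup' (hAct l)
      fun a => f 0 l a + maxPathReward Act hAct nextL (fun j => f (j + 1)) r (nextL l a)
    obtain ⟨s, hs, hsum⟩ := ih (fun j => f (j + 1)) (nextL l a)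
    refine ⟨fun j => Nat.casesOn j a s, (isAdmissible_succ_iff Act nextL r l _).2 ⟨ha, hs⟩, ?_⟩
    rw [pathReward_succ, maxPathReward, hmax]
    exact congrArg (f 0 l a + ·) hsum

theorem isGreatest_maxPathReward (f : ℕ → L → α → ℝ) (r : ℕ) (l : L) :
    IsGreatest {x | ∃ s, IsAdmissible Act nextL r l s ∧ x = pathReward nextL f r l s}
      (maxPathReward Act hAct nextL f r l) := by
  refine ⟨?_, ?_⟩
  · obtain ⟨s, hs, hsum⟩ := exists_pathReward_eq_maxPathReward Act hAct nextL f r l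
    exact ⟨s, hs, hsum.symm⟩
  · rintro x ⟨s, hs, rfl⟩
    exact pathReward_le_maxPathReward Act hAct nextL f r l s hs

theorem adaptiveValue_eq_maxPathReward {Z : Type*} (n : ℕ)
    (Exp : ℕ → L × Z → α → (Z → ℝ) → ℝ) (R : ℕ → L → α → ℝ) (U : ℕ → L × Z → ℝ)
    (hUterm : ∀ l z, U (n - 1) (l, z) = (Act l).sup' (hAct l) fun a => R (n - 1) l a)
    (hU : ∀ i < n - 1, ∀ l z,
      U i (l, z) = (Act l).sup' (hAct l) fun a =>
        R i l a + Exp i (l, z) a fun z' => U (i + 1) (nextL l a, z'))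
    (hExpConst : ∀ i d a (c : ℝ), Exp i d a (fun _ => c) = c)
    (k i : ℕ) (hik : i + k = n - 1) (l : L) (z : Z) :
    U i (l, z) = maxPathReward Act hAct nextL (fun j => R (i + j)) (k + 1) l := by
  induction k generalizing i l z with
  | zero =>
    obtain rfl : i = n - 1 := by omega
    simp only [hUterm, maxPathReward, add_zero]
  | succ k ih =>
    rw [hU i (by omega), maxPathReward]
    refine Finset.sup'_congr _ rfl fun a _ => ?_
    have hnext : (fun z' => U (i + 1) (nextL l a, z')) =
        fun _ => maxPathReward Act hAct nextL (fun j => R (i + 1 + j)) (k + 1) (nextL l a) :=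
      funext fun z' => ih (i + 1) (by omega) _ z'
    simp only [hnext, hExpConst, add_zero, Nat.add_assoc, Nat.add_comm 1]

end PathDP

/-- Theorem 2 (no benefit of adaptivity).  Data are pairs `(l, z)` of a location
history `l : L` and a measurement-value history `z : Z`; the transition of locations
`nextL` is deterministic and `Exp i (l,z) a g` is the expectation of `g` over the new
measurement-value history.  The hypothesis that each stagewise entropy
`H[Z_{τ(x_i,a_i)} | d_i]` is independent of the measurement values is expressed by
`Hnew : ℕ → L → α → ℝ` depending only on the location history.  Then the optimal value
of the adaptive dynamic program equals the optimal value of the single-stage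
non-adaptive (maximum entropy sampling) problem:
`U^{π¹}₀(d₀) = max_{a_{0:n-1}} H[Z_{x_{1:n}} | d₀]`, where by the chain rule of entropy
`H[Z_{x_{1:n}} | d₀] = Σ_i H[Z_{x_{i+1}} | d_i]` along the induced deterministic path. -/
theorem no_benefit_of_adaptivity
    {L Z α : Type*} (n : ℕ) (hn : 1 ≤ n)
    (Act : L → Finset α) (hAct : ∀ l, (Act l).Nonempty)
    (nextL : L → α → L)
    (Exp : ℕ → L × Z → α → (Z → ℝ) → ℝ)
    (Hnew : ℕ → L → α → ℝ)  -- stagewise entropy: independent of measurement values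
    (U : ℕ → L × Z → ℝ)
    -- reward-maximizing adaptive dynamic program:
    (hUterm : ∀ l z, U (n - 1) (l, z) = (Act l).sup' (hAct l) fun a => Hnew (n - 1) l a)
    (hU : ∀ i < n - 1, ∀ l z,
      U i (l, z) = (Act l).sup' (hAct l) fun a =>
        Hnew i l a + Exp i (l, z) a fun z' => U (i + 1) (nextL l a, z'))
    -- expectation of a constant is that constant (probability normalization):
    (hExpConst : ∀ i d a (c : ℝ), Exp i d a (fun _ => c) = c)
    -- chain rule of entropy for the joint path entropy given prior data:
    (l0 : L) (z0 : Z) (Hjoint : (ℕ → α) → ℝ)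
    (chainRule : ∀ s : ℕ → α,
      Hjoint s = ∑ i ∈ Finset.range n, Hnew i (pathLoc nextL l0 s i) (s i)) :
    U 0 (l0, z0) =
      sSup {x : ℝ | ∃ s : ℕ → α,
        (∀ i < n, s i ∈ Act (pathLoc nextL l0 s i)) ∧ x = Hjoint s} := by
  have hn' : n - 1 + 1 = n := Nat.sub_add_cancel hn
  have hU0 := PathDP.adaptiveValue_eq_maxPathReward Act hAct nextL n Exp Hnew U
    hUterm hU hExpConst (n - 1) 0 (zero_add _) l0 z0
  simp only [zero_add, hn'] at hU0
  have hset :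
      {x : ℝ | ∃ s : ℕ → α, (∀ i < n, s i ∈ Act (pathLoc nextL l0 s i)) ∧ x = Hjoint s} =
        {x | ∃ s, PathDP.IsAdmissible Act nextL n l0 s ∧
          x = PathDP.pathReward nextL Hnew n l0 s} := by
    simp only [chainRule]
    rfl
  rw [hU0, hset, (PathDP.isGreatest_maxPathReward Act hAct nextL Hnew n l0).csSup_eq]
end

section
/- Theorem 4 (monotone bounding of the adaptive value): for the strictly adaptive log-Gaussian exploration dynamic program, with lower approximate values U̲ᵛ_i defined by replacing each expectation with the ν-cell generalized Jensen bound, and upper approximate values U̅ᵛ_i by the ν-cell Edmundson–Madansky bound, the bounds are monotone and enclose the true optimum: if the (ν+1)-partition refines the ν-partition by splitting one interval, then U̲ᵛ_i(d_i) ≤ U̲^{ν+1}_i(d_i) ≤ U_i(d_i) ≤ U̅^{ν+1}_i(d_i) ≤ U̅ᵛ_i(d_i) for all i = 0,…,t. -/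
/-!
Each of the four inequalities follows by its own backward induction over the stages: the two
dynamic programs being compared have the same terminal values and the same rewards. At a
stage `i < t`, the induction hypothesis compares the two stage-`(i + 1)` value functions
pointwise; a monotone operator carries this comparison through the expectation, and the
generalized Jensen / Edmundson–Madansky bounds compare the two operators on the integrand
`x ↦ V (i + 1) (Fin.snoc z x)`, which is convex because `V (i + 1)` is convex and `Fin.snoc z` is
affine. Taking the maximum over the same finite action set preserves the inequality.
-/

theorem Fin.smul_snoc_add_smul_snoc {𝕜 E : Type*} [Semiring 𝕜] [AddCommMonoid E] [Module 𝕜 E]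
    {n : ℕ} (z : Fin n → E) (x y : E) {a b : 𝕜} (hab : a + b = 1) :
    a • (Fin.snoc z x : Fin (n + 1) → E) + b • (Fin.snoc z y : Fin (n + 1) → E) =
      Fin.snoc z (a • x + b • y) := by
  funext j
  cases j using Fin.lastCases with
  | last => simp only [Pi.add_apply, Pi.smul_apply, Fin.snoc_last]
  | cast j => simp only [Pi.add_apply, Pi.smul_apply, Fin.snoc_castSucc, ← add_smul, hab, one_smul]

theorem ConvexOn.comp_snoc {𝕜 E β : Type*} [Semiring 𝕜] [PartialOrder 𝕜] [AddCommMonoid E]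
    [Module 𝕜 E] [AddCommMonoid β] [PartialOrder β] [SMul 𝕜 β] {n : ℕ}
    {F : (Fin (n + 1) → E) → β} (hF : ConvexOn 𝕜 Set.univ F) (z : Fin n → E) :
    ConvexOn 𝕜 Set.univ fun x => F (Fin.snoc z x) := by
  refine ⟨convex_univ, fun x _ y _ a b ha hb hab => ?_⟩
  dsimp only
  rw [← Fin.smul_snoc_add_smul_snoc z x y hab]
  exact hF.2 (Set.mem_univ _) (Set.mem_univ _) ha hb hab

theorem le_of_bellman_le {α Ω β : Type*} {X : ℕ → Type*} [SemilatticeSup β] [Add β]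
    [AddLeftMono β] {t : ℕ} (next : ∀ i, X i → Ω → X (i + 1)) (A : ℕ → Finset α)
    (hA : ∀ i, (A i).Nonempty) (r : ∀ i, α → X i → β) (S T : ∀ i, α → X i → (Ω → β) → β)
    (V W : ∀ i, X i → β) (hVW : V t ≤ W t)
    (hV : ∀ i < t, ∀ z, V i z = (A i).sup' (hA i) fun a =>
      r i a z + S i a z fun x => V (i + 1) (next i z x))
    (hW : ∀ i < t, ∀ z, W i z = (A i).sup' (hA i) fun a =>
      r i a z + T i a z fun x => W (i + 1) (next i z x))
    (hstep : ∀ i < t, V (i + 1) ≤ W (i + 1) → ∀ a z,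
      (S i a z fun x => V (i + 1) (next i z x)) ≤ T i a z fun x => W (i + 1) (next i z x)) :
    ∀ i ≤ t, V i ≤ W i := by
  intro i hi
  induction hi using Nat.decreasingInduction with
  | self => exact hVW
  | of_succ i hi ih =>
    intro z
    rw [hV i hi z, hW i hi z]
    exact Finset.sup'_mono_fun fun a _ => add_le_add_right (hstep i hi ih a z) _

/-- Theorem 4 (monotone bounding of the strictly adaptive value).  Strictly adaptive
log-Gaussian exploration dynamic program over stages `i = 0,…,t`, with stagewise
rewards `Hent i a z` (`z : Fin (k+i) → ℝ` the observed measurement values) and one new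
measurement appended per stage.  `Eop i a z` is the true conditional expectation
operator of a function of the new measurement `Z_{x_{i+1}}` given data values `z`;
`Jl ν` (resp. `Ju ν`) is its ν-cell generalized Jensen lower (resp. Edmundson–Madansky
upper) approximation, each `(ν+1)`-partition refining the ν-partition by splitting one
interval, so that on convex integrands
`Jl ν ≤ Jl (ν+1) ≤ Eop ≤ Ju (ν+1) ≤ Ju ν`, and all three operators are monotone
(nonnegative weighted sums preserve pointwise inequalities).  `U` is the exact value
function and `Ul ν`, `Uu ν` the lower/upper approximate value functions; all value
functions are convex in the measurement vector (Lemma 3).  Then the bounds are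
monotone and enclose the true optimum:
`Ul ν i ≤ Ul (ν+1) i ≤ U i ≤ Uu (ν+1) i ≤ Uu ν i` for all `i = 0,…,t`. -/
theorem monotone_bounding_of_adaptive_value
    {α : Type*} (t k : ℕ)
    (A : ℕ → Finset α) (hA : ∀ i, (A i).Nonempty)
    (Hent : (i : ℕ) → α → (Fin (k + i) → ℝ) → ℝ)
    (Eop : (i : ℕ) → α → (Fin (k + i) → ℝ) → (ℝ → ℝ) → ℝ)
    (Jl Ju : ℕ → (i : ℕ) → α → (Fin (k + i) → ℝ) → (ℝ → ℝ) → ℝ)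
    (U : (i : ℕ) → (Fin (k + i) → ℝ) → ℝ)
    (Ul Uu : ℕ → (i : ℕ) → (Fin (k + i) → ℝ) → ℝ)
    -- exact dynamic program:
    (hUt : ∀ z, U t z = (A t).sup' (hA t) fun a => Hent t a z)
    (hU : ∀ i < t, ∀ z, U i z = (A i).sup' (hA i) fun a =>
      Hent i a z + Eop i a z fun x => U (i + 1) (Fin.snoc z x))
    -- lower (generalized Jensen) approximate dynamic program:
    (hUlt : ∀ ν z, Ul ν t z = (A t).sup' (hA t) fun a => Hent t a z)
    (hUl : ∀ ν, ∀ i < t, ∀ z, Ul ν i z = (A i).sup' (hA i) fun a =>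
      Hent i a z + Jl ν i a z fun x => Ul ν (i + 1) (Fin.snoc z x))
    -- upper (Edmundson–Madansky) approximate dynamic program:
    (hUut : ∀ ν z, Uu ν t z = (A t).sup' (hA t) fun a => Hent t a z)
    (hUu : ∀ ν, ∀ i < t, ∀ z, Uu ν i z = (A i).sup' (hA i) fun a =>
      Hent i a z + Ju ν i a z fun x => Uu ν (i + 1) (Fin.snoc z x))
    -- generalized Jensen / EM bounds with refinement monotonicity, on convex integrands:
    (hBounds : ∀ ν i a z (g : ℝ → ℝ), ConvexOn ℝ Set.univ g →
      Jl ν i a z g ≤ Jl (ν + 1) i a z g ∧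
      Jl (ν + 1) i a z g ≤ Eop i a z g ∧
      Eop i a z g ≤ Ju (ν + 1) i a z g ∧
      Ju (ν + 1) i a z g ≤ Ju ν i a z g)
    -- the operators preserve pointwise inequalities:
    (hMonoJl : ∀ ν i a z (g h : ℝ → ℝ), (∀ x, g x ≤ h x) → Jl ν i a z g ≤ Jl ν i a z h)
    (hMonoE : ∀ i a z (g h : ℝ → ℝ), (∀ x, g x ≤ h x) → Eop i a z g ≤ Eop i a z h)
    (hMonoJu : ∀ ν i a z (g h : ℝ → ℝ), (∀ x, g x ≤ h x) → Ju ν i a z g ≤ Ju ν i a z h)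
    -- convexity of all value functions in the measurement vector (Lemma 3):
    (hconvU : ∀ i ≤ t, ConvexOn ℝ Set.univ (U i))
    (hconvUl : ∀ ν, ∀ i ≤ t, ConvexOn ℝ Set.univ (Ul ν i))
    (hconvUu : ∀ ν, ∀ i ≤ t, ConvexOn ℝ Set.univ (Uu ν i)) :
    ∀ ν, ∀ i ≤ t, ∀ z,
      Ul ν i z ≤ Ul (ν + 1) i z ∧ Ul (ν + 1) i z ≤ U i z ∧
      U i z ≤ Uu (ν + 1) i z ∧ Uu (ν + 1) i z ≤ Uu ν i z := by
  intro ν i hi z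
  have compare := le_of_bellman_le (X := fun i => Fin (k + i) → ℝ) (t := t)
    (fun _ z x => Fin.snoc z x) A hA Hent
  have lower_mono := compare (Jl ν) (Jl (ν + 1)) (Ul ν) (Ul (ν + 1))
    (fun z => ((hUlt ν z).trans (hUlt (ν + 1) z).symm).le) (hUl ν) (hUl (ν + 1))
    fun i hi hle a z => (hMonoJl _ _ _ _ _ _ fun x => hle _).trans
      (hBounds ν i a z _ ((hconvUl (ν + 1) (i + 1) hi).comp_snoc z)).1
  have lower_le := compare (Jl (ν + 1)) Eop (Ul (ν + 1)) U
    (fun z => ((hUlt (ν + 1) z).trans (hUt z).symm).le) (hUl (ν + 1)) hU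
    fun i hi hle a z => (hBounds ν i a z _ ((hconvUl (ν + 1) (i + 1) hi).comp_snoc z)).2.1.trans
      (hMonoE _ _ _ _ _ fun x => hle _)
  have le_upper := compare Eop (Ju (ν + 1)) U (Uu (ν + 1))
    (fun z => ((hUt z).trans (hUut (ν + 1) z).symm).le) hU (hUu (ν + 1))
    fun i hi hle a z => (hBounds ν i a z _ ((hconvU (i + 1) hi).comp_snoc z)).2.2.1.trans
      (hMonoJu _ _ _ _ _ _ fun x => hle _)
  have upper_mono := compare (Ju (ν + 1)) (Ju ν) (Uu (ν + 1)) (Uu ν)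
    (fun z => ((hUut (ν + 1) z).trans (hUut ν z).symm).le) (hUu (ν + 1)) (hUu ν)
    fun i hi hle a z => (hBounds ν i a z _ ((hconvUu (ν + 1) (i + 1) hi).comp_snoc z)).2.2.2.trans
      (hMonoJu _ _ _ _ _ _ fun x => hle _)
  exact ⟨lower_mono i hi z, lower_le i hi z, le_upper i hi z, upper_mono i hi z⟩
end
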